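/- Let M ≥ 2 be an integer, num(n) = M^(s₂(n)), cum(n) = Σ_{m=0}^n num(m), and define f_k(x) = cum((Σ_{i=1}^k x_i 2^{k−i}) − 1)/cum(2^k − 1) for x = Σ_{i=1}^∞ x_i/2^i with binary digits x_i. Then for each such x the limit f(x) = lim_{k→∞} f_k(x) exists and equals Σ_{i=1}^∞ x_i · M^(Σ_{j=1}^{i−1} x_j) · (M+1)^(−i). -/

import Mathlib

/-!
Write `s` for the binary digit sum and `cum n = ∑_{m<n} M^{s m}`. Since `s (2q) = s q` and
`s (2q+1) = s q + 1`, pairing `2q` with `2q+1` gives `cum (b + 2N) = (M+1) cum N + b M^{s N}`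
for a bit `b`. Reading the binary prefix `N_k = ∑_{i≤k} x_i 2^{k-i}` one digit at a time,
`N_{k+1} = x_{k+1} + 2 N_k`, this recursion unrolls to `cum N_k = (M+1)^k S_k`, where `S_k` is
the `k`-th partial sum of the limiting series; in particular `cum 2^k = (M+1)^k`. So `f_k = S_k`,
and the partial sums of this nonnegative series are bounded by `f_k ≤ 1`, hence converge.
-/

open Finset

namespace Nat

theorem digits_two_sum_add_two_mul {b : ℕ} (hb : b < 2) (q : ℕ) :
    (digits 2 (b + 2 * q)).sum = b + (digits 2 q).sum := by
  by_cases h : b = 0 ∧ q = 0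
  · simp [h.1, h.2]
  · rw [digits_add 2 one_lt_two b q hb (by tauto), List.sum_cons]

theorem digits_two_sum_two_mul (q : ℕ) : (digits 2 (2 * q)).sum = (digits 2 q).sum := by
  simpa using digits_two_sum_add_two_mul zero_lt_two q

theorem sum_range_two_mul_pow_digits_two_sum (M N : ℕ) :
    ∑ m ∈ range (2 * N), M ^ (digits 2 m).sum = (M + 1) * ∑ m ∈ range N, M ^ (digits 2 m).sum := by
  induction N with
  | zero => simp
  | succ N ih =>
    have hodd : (digits 2 (2 * N + 1)).sum = (digits 2 N).sum + 1 := by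
      rw [add_comm, digits_two_sum_add_two_mul one_lt_two, add_comm]
    rw [show 2 * (N + 1) = 2 * N + 1 + 1 by ring, sum_range_succ, sum_range_succ, ih, digits_two_sum_two_mul, hodd,
      sum_range_succ]
    ring

theorem sum_range_add_two_mul_pow_digits_two_sum (M : ℕ) {b : ℕ} (hb : b < 2) (N : ℕ) :
    ∑ m ∈ range (b + 2 * N), M ^ (digits 2 m).sum
      = (M + 1) * ∑ m ∈ range N, M ^ (digits 2 m).sum + b * M ^ (digits 2 N).sum := by
  interval_cases b
  · simp [sum_range_two_mul_pow_digits_two_sum]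
  · rw [add_comm, sum_range_succ, sum_range_two_mul_pow_digits_two_sum, digits_two_sum_two_mul]
    ring

theorem sum_range_two_pow_pow_digits_two_sum (M k : ℕ) :
    ∑ m ∈ range (2 ^ k), M ^ (digits 2 m).sum = (M + 1) ^ k := by
  induction k with
  | zero => simp
  | succ k ih => rw [pow_succ', sum_range_two_mul_pow_digits_two_sum, ih, pow_succ']

end Nat

open Nat

def binaryPrefix (x : ℕ → ℕ) (k : ℕ) : ℕ := ∑ i ∈ Icc 1 k, x i * 2 ^ (k - i)

theorem binaryPrefix_succ (x : ℕ → ℕ) (k : ℕ) :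
    binaryPrefix x (k + 1) = x (k + 1) + 2 * binaryPrefix x k := by
  rw [binaryPrefix, sum_Icc_succ_top (by omega), binaryPrefix, mul_sum, add_comm]
  congr 1
  · simp
  · refine sum_congr rfl fun i hi => ?_
    rw [show k + 1 - i = k - i + 1 by grind, pow_succ]
    ring

section BinaryPrefix

variable {x : ℕ → ℕ}

theorem binaryPrefix_lt_two_pow (hx : ∀ i, x i ≤ 1) (k : ℕ) : binaryPrefix x k < 2 ^ k := by
  induction k with
  | zero => simp [binaryPrefix]
  | succ k ih =>
    rw [binaryPrefix_succ, pow_succ]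
    have := hx (k + 1)
    omega

theorem digits_two_sum_binaryPrefix (hx : ∀ i, x i ≤ 1) (k : ℕ) :
    (digits 2 (binaryPrefix x k)).sum = ∑ j ∈ range k, x (j + 1) := by
  induction k with
  | zero => simp [binaryPrefix]
  | succ k ih =>
    rw [binaryPrefix_succ, digits_two_sum_add_two_mul (by grind), ih, sum_range_succ, add_comm]

theorem sum_range_binaryPrefix_pow_digits_two_sum (M : ℕ) (hx : ∀ i, x i ≤ 1) (k : ℕ) :
    ((∑ m ∈ range (binaryPrefix x k), M ^ (digits 2 m).sum : ℕ) : ℝ)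
      = ((M : ℝ) + 1) ^ k * ∑ i ∈ range k,
          (x (i + 1) : ℝ) * (M : ℝ) ^ (∑ j ∈ range i, x (j + 1)) * ((M : ℝ) + 1)⁻¹ ^ (i + 1) := by
  induction k with
  | zero => simp [binaryPrefix]
  | succ k ih =>
    have hinv : ((M : ℝ) + 1) ^ (k + 1) * ((M : ℝ) + 1)⁻¹ ^ (k + 1) = 1 := by
      rw [← mul_pow, mul_inv_cancel₀ (by positivity), one_pow]
    rw [binaryPrefix_succ, sum_range_add_two_mul_pow_digits_two_sum M (by grind),
      digits_two_sum_binaryPrefix hx, Nat.cast_add, Nat.cast_mul, ih]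
    push_cast
    rw [sum_range_succ, mul_add]
    linear_combination -(x (k + 1) * (M : ℝ) ^ (∑ j ∈ range k, x (j + 1))) * hinv

end BinaryPrefix

theorem stmt12_general (M : ℕ) (x : ℕ → ℕ) (hx : ∀ i, x i ≤ 1) :
    Filter.Tendsto (fun k : ℕ =>
        ((∑ m ∈ Finset.range (∑ i ∈ Finset.Icc 1 k, x i * 2 ^ (k - i)),
            M ^ (Nat.digits 2 m).sum : ℕ) : ℝ) /
        ((∑ m ∈ Finset.range (2 ^ k), M ^ (Nat.digits 2 m).sum : ℕ) : ℝ))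
      Filter.atTop
      (nhds (∑' i : ℕ, (x (i + 1) : ℝ) * (M : ℝ) ^ (∑ j ∈ Finset.range i, x (j + 1)) *
        ((M : ℝ) + 1)⁻¹ ^ (i + 1))) := by
  set a : ℕ → ℝ := fun i =>
    (x (i + 1) : ℝ) * (M : ℝ) ^ (∑ j ∈ range i, x (j + 1)) * ((M : ℝ) + 1)⁻¹ ^ (i + 1)
  have hratio (k : ℕ) : ((∑ m ∈ range (binaryPrefix x k), M ^ (digits 2 m).sum : ℕ) : ℝ) /
      ((∑ m ∈ range (2 ^ k), M ^ (digits 2 m).sum : ℕ) : ℝ) = ∑ i ∈ range k, a i := by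
    rw [sum_range_binaryPrefix_pow_digits_two_sum M hx, sum_range_two_pow_pow_digits_two_sum]
    push_cast
    exact mul_div_cancel_left₀ _ (by positivity)
  have hbounded (k : ℕ) : ∑ i ∈ range k, a i ≤ 1 := by
    rw [← hratio]
    refine div_le_one_of_le₀ ?_ (Nat.cast_nonneg _)
    exact_mod_cast sum_le_sum_of_subset (range_subset_range.mpr (binaryPrefix_lt_two_pow hx k).le)
  have hsummable : Summable a := summable_of_sum_range_le (fun i => by positivity) hbounded
  exact hsummable.hasSum.tendsto_sum_nat.congr fun k => (hratio k).symm

/-- The normalized cumulative counts `f_k(x) = cum((Σ_{i≤k} x_i 2^{k-i}) - 1)/cum(2^k - 1)`,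
where `num m = M^{s₂(m)}` and `cum(n-1) = Σ_{m<n} num m`, converge as `k → ∞` to
`Σ_{i≥1} x_i M^{Σ_{j<i} x_j} (M+1)^{-i}`. -/
theorem stmt12 (M : ℕ) (hM : 2 ≤ M) (x : ℕ → ℕ) (hx : ∀ i, x i ≤ 1) :
    Filter.Tendsto (fun k : ℕ =>
        ((∑ m ∈ Finset.range (∑ i ∈ Finset.Icc 1 k, x i * 2 ^ (k - i)),
            M ^ (Nat.digits 2 m).sum : ℕ) : ℝ) /
        ((∑ m ∈ Finset.range (2 ^ k), M ^ (Nat.digits 2 m).sum : ℕ) : ℝ))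
      Filter.atTop
      (nhds (∑' i : ℕ, (x (i + 1) : ℝ) * (M : ℝ) ^ (∑ j ∈ Finset.range i, x (j + 1)) *
        ((M : ℝ) + 1)⁻¹ ^ (i + 1))) :=
  stmt12_general M x hx
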